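/- For any valuation v of the propositional variables, a formula A is true under v if and only if there exists a clique L of A such that every leaf in L is labelled by a literal true under v. -/

import Mathlib

/-!
Induction on the formula: an ∨-resolution of `A ∧ B` is a pair of resolutions of `A` and `B`,
and one of `A ∨ B` is a resolution of one of the disjuncts, matching the truth tables of ∧ and ∨.
-/

/-- Literals: propositional variables and their negations. -/
inductive Lit where
  | pos : Nat → Lit
  | neg : Nat → Lit
deriving DecidableEq

/-- Formulas of classical propositional logic, built from literals by binary ∧ and ∨. -/
inductive Formula where
  | lit : Lit → Formula
  | and : Formula → Formula → Formula
  | or  : Formula → Formula → Formula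

/-- Leaves of the parse tree, identified by their positions (paths: `false` = left,
`true` = right). -/
def Formula.leaves : Formula → Set (List Bool)
  | .lit _ => {[]}
  | .and A B => (fun p => false :: p) '' A.leaves ∪ (fun p => true :: p) '' B.leaves
  | .or A B  => (fun p => false :: p) '' A.leaves ∪ (fun p => true :: p) '' B.leaves

/-- The literal labelling the leaf at a given path, if any. -/
def Formula.labelAt : Formula → List Bool → Option Lit
  | .lit l, [] => some l
  | .and A B, b :: p => if b then B.labelAt p else A.labelAt p
  | .or A B, b :: p => if b then B.labelAt p else A.labelAt p
  | _, _ => none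

/-- ∨-resolutions of a formula: delete one argument subtree at each ∨-vertex. -/
inductive Res : Formula → Type where
  | lit : (l : Lit) → Res (.lit l)
  | and : {A B : Formula} → Res A → Res B → Res (.and A B)
  | orL : {A B : Formula} → Res A → Res (.or A B)
  | orR : {A B : Formula} → Res B → Res (.or A B)

/-- The set of leaves of `A` retained by an ∨-resolution. -/
def Res.leafSet : {A : Formula} → Res A → Set (List Bool)
  | _, .lit _ => {[]}
  | _, .and ra rb => (fun p => false :: p) '' ra.leafSet ∪ (fun p => true :: p) '' rb.leafSet
  | _, .orL ra => (fun p => false :: p) '' ra.leafSet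
  | _, .orR rb => (fun p => true :: p) '' rb.leafSet

/-- Cliques: leaf sets of ∨-resolutions. -/
def Formula.cliques (A : Formula) : Set (Set (List Bool)) :=
  {L | ∃ r : Res A, r.leafSet = L}

/-- ∧-resolutions of a formula: delete one argument subtree at each ∧-vertex. -/
inductive CoRes : Formula → Type where
  | lit : (l : Lit) → CoRes (.lit l)
  | or : {A B : Formula} → CoRes A → CoRes B → CoRes (.or A B)
  | andL : {A B : Formula} → CoRes A → CoRes (.and A B)
  | andR : {A B : Formula} → CoRes B → CoRes (.and A B)

/-- The set of leaves of `A` retained by an ∧-resolution. -/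
def CoRes.leafSet : {A : Formula} → CoRes A → Set (List Bool)
  | _, .lit _ => {[]}
  | _, .or ra rb => (fun p => false :: p) '' ra.leafSet ∪ (fun p => true :: p) '' rb.leafSet
  | _, .andL ra => (fun p => false :: p) '' ra.leafSet
  | _, .andR rb => (fun p => true :: p) '' rb.leafSet

/-- Co-cliques: leaf sets of ∧-resolutions. -/
def Formula.cocliques (A : Formula) : Set (Set (List Bool)) :=
  {M | ∃ r : CoRes A, r.leafSet = M}

/-- Truth of a literal under a valuation. -/
def Lit.eval (v : Nat → Bool) : Lit → Bool
  | .pos n => v n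
  | .neg n => !(v n)

/-- Standard Boolean semantics. -/
def Formula.eval (v : Nat → Bool) : Formula → Bool
  | .lit l => l.eval v
  | .and A B => A.eval v && B.eval v
  | .or A B => A.eval v || B.eval v

/-- Number of ∨-vertices in the parse tree. -/
def Formula.orCount : Formula → Nat
  | .lit _ => 0
  | .and A B => A.orCount + B.orCount
  | .or A B => A.orCount + B.orCount + 1

/-- Number of ∧-vertices in the parse tree. -/
def Formula.andCount : Formula → Nat
  | .lit _ => 0
  | .and A B => A.andCount + B.andCount + 1
  | .or A B => A.andCount + B.andCount

/-- Complement of a literal. -/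
def Lit.compl : Lit → Lit
  | .pos n => .neg n
  | .neg n => .pos n

/-- De Morgan dual: swap ∧ with ∨ and negate every literal. -/
def Formula.dual : Formula → Formula
  | .lit l => .lit l.compl
  | .and A B => .or A.dual B.dual
  | .or A B => .and A.dual B.dual

namespace Formula

def TrueAt (v : Nat → Bool) (A : Formula) (p : List Bool) : Prop :=
  ∃ l, A.labelAt p = some l ∧ l.eval v = true

variable {v : Nat → Bool} {A B : Formula} {p : List Bool}

@[simp] lemma trueAt_lit_nil {l : Lit} : (lit l).TrueAt v [] ↔ l.eval v = true := by
  simp [TrueAt, labelAt]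

@[simp] lemma trueAt_and_false : (A.and B).TrueAt v (false :: p) ↔ A.TrueAt v p := Iff.rfl

@[simp] lemma trueAt_and_true : (A.and B).TrueAt v (true :: p) ↔ B.TrueAt v p := Iff.rfl

@[simp] lemma trueAt_or_false : (A.or B).TrueAt v (false :: p) ↔ A.TrueAt v p := Iff.rfl

@[simp] lemma trueAt_or_true : (A.or B).TrueAt v (true :: p) ↔ B.TrueAt v p := Iff.rfl

end Formula

namespace Res

variable {v : Nat → Bool} {A B : Formula}

def Holds (v : Nat → Bool) (r : Res A) : Prop :=
  ∀ p ∈ r.leafSet, A.TrueAt v p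

@[simp] lemma holds_lit {l : Lit} : (Res.lit l).Holds v ↔ l.eval v = true := by
  simp [Holds, leafSet]

@[simp] lemma holds_and {ra : Res A} {rb : Res B} :
    (Res.and ra rb).Holds v ↔ ra.Holds v ∧ rb.Holds v := by
  simp [Holds, leafSet, or_imp, forall_and]

@[simp] lemma holds_orL {ra : Res A} : (Res.orL (B := B) ra).Holds v ↔ ra.Holds v := by
  simp [Holds, leafSet]

@[simp] lemma holds_orR {rb : Res B} : (Res.orR (A := A) rb).Holds v ↔ rb.Holds v := by
  simp [Holds, leafSet]

lemma exists_lit {l : Lit} {P : Res (.lit l) → Prop} : (∃ r, P r) ↔ P (.lit l) :=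
  ⟨fun ⟨r, hr⟩ => by cases r; exact hr, fun h => ⟨_, h⟩⟩

lemma exists_and {P : Res (A.and B) → Prop} : (∃ r, P r) ↔ ∃ ra rb, P (.and ra rb) :=
  ⟨fun ⟨r, hr⟩ => by cases r with | and ra rb => exact ⟨ra, rb, hr⟩,
    fun ⟨_, _, h⟩ => ⟨_, h⟩⟩

lemma exists_or {P : Res (A.or B) → Prop} :
    (∃ r, P r) ↔ (∃ ra, P (.orL ra)) ∨ ∃ rb, P (.orR rb) :=
  ⟨fun ⟨r, hr⟩ => by
    cases r with
    | orL ra => exact .inl ⟨ra, hr⟩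
    | orR rb => exact .inr ⟨rb, hr⟩,
    fun h => h.elim (fun ⟨_, h⟩ => ⟨_, h⟩) (fun ⟨_, h⟩ => ⟨_, h⟩)⟩

end Res

lemma Formula.eval_eq_true_iff_exists_res_holds (A : Formula) (v : Nat → Bool) :
    A.eval v = true ↔ ∃ r : Res A, r.Holds v := by
  induction A with
  | lit l => simp [eval, Res.exists_lit]
  | and A B ihA ihB =>
    simp [eval, ihA, ihB, Res.exists_and, exists_and_left, exists_and_right]
  | or A B ihA ihB => simp [eval, ihA, ihB, Res.exists_or]

theorem eval_true_iff_clique (A : Formula) (v : Nat → Bool) :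
    A.eval v = true ↔
      ∃ L ∈ A.cliques, ∀ p ∈ L, ∃ l, A.labelAt p = some l ∧ l.eval v = true := by
  rw [A.eval_eq_true_iff_exists_res_holds v]
  constructor
  · rintro ⟨r, hr⟩
    exact ⟨r.leafSet, ⟨r, rfl⟩, hr⟩
  · rintro ⟨_, ⟨r, rfl⟩, hr⟩
    exact ⟨r, hr⟩
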